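/- There exists a subgroup H of G of index 28 such that the range of the natural homomorphism G → Equiv.Perm (G ⧸ H) given by left multiplication on the cosets is isomorphic (as a group) to the alternating group A₈ on eight letters. -/
import Mathlib

set_option maxRecDepth 200000

namespace Stmt3

def a : FreeGroup (Fin 2) := FreeGroup.of 0
def b : FreeGroup (Fin 2) := FreeGroup.of 1

/-- The two relators of `π₁(∂W) = π₁(Σ(2,5,7)) = ⟨a,b | aBab²aBab³, a⁴bAb⟩`. -/
def rels : Set (FreeGroup (Fin 2)) :=
  { a * b⁻¹ * a * b^2 * a * b⁻¹ * a * b^3, a^4 * b * a⁻¹ * b }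

/-- The fundamental group `G = π₁(∂W)` of the boundary of the Akbulut cork. -/
abbrev G := PresentedGroup rels

open Equiv Equiv.Perm Subgroup MulAction Pointwise

/-- the 5-cycle (0 1 2 3 4) -/
def α : Equiv.Perm (Fin 8) := Equiv.swap 0 4 * Equiv.swap 0 3 * Equiv.swap 0 2 * Equiv.swap 0 1

/-- the 7-cycle (1 5 2 6 3 7 4) -/
def β : Equiv.Perm (Fin 8) :=
  Equiv.swap 1 4 * Equiv.swap 1 7 * Equiv.swap 1 3 * Equiv.swap 1 6 * Equiv.swap 1 2 * Equiv.swap 1 5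

def f : Fin 2 → Equiv.Perm (Fin 8) := ![α, β]

theorem hrels : ∀ r ∈ rels, FreeGroup.lift f r = 1 := by
  intro r hr
  simp only [rels, Set.mem_insert_iff, Set.mem_singleton_iff] at hr
  rcases hr with rfl | rfl <;>
    · simp only [a, b, map_mul, map_inv, map_pow, FreeGroup.lift_apply_of]
      decide

def φ : G →* Equiv.Perm (Fin 8) := PresentedGroup.toGroup hrels

lemma φ_of (i : Fin 2) : φ (PresentedGroup.of i) = f i := PresentedGroup.toGroup.of hrels

def C : Subgroup (Equiv.Perm (Fin 8)) := Subgroup.closure (Set.range f)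

lemma hαC : α ∈ C := Subgroup.subset_closure ⟨0, rfl⟩
lemma hβC : β ∈ C := Subgroup.subset_closure ⟨1, rfl⟩

def cα : C := ⟨α, hαC⟩
def cβ : C := ⟨β, hβC⟩

lemma range_φ : φ.range = C := by
  have h1 : (φ.range : Subgroup (Equiv.Perm (Fin 8))) = Subgroup.map φ ⊤ :=
    MonoidHom.range_eq_map φ
  have h2 : φ ∘ (PresentedGroup.of : Fin 2 → G) = f := funext φ_of
  rw [h1, ← PresentedGroup.closure_range_of rels, MonoidHom.map_closure, ← Set.range_comp, h2]
  rfl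

abbrev C1 : Subgroup C := stabilizer C (0 : Fin 8)
abbrev C2 : Subgroup C1 := stabilizer C1 (1 : Fin 8)
abbrev C3 : Subgroup C2 := stabilizer C2 (2 : Fin 8)
abbrev C4 : Subgroup C3 := stabilizer C3 (3 : Fin 8)
abbrev C5 : Subgroup C4 := stabilizer C4 (4 : Fin 8)
abbrev C6 : Subgroup C5 := stabilizer C5 (5 : Fin 8)

lemma step' {H : Type*} [Group H] [Finite H] [MulAction H (Fin 8)] (x : Fin 8)
    (T : Finset (Fin 8)) (h1 : ∀ t ∈ T, t ∈ orbit H x) :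
    T.card * Nat.card (stabilizer H x) ≤ Nat.card H := by
  rw [← Subgroup.index_mul_card (stabilizer H x), index_stabilizer]
  have hsub : (↑T : Set (Fin 8)) ⊆ orbit H x := fun t ht => h1 t ht
  have hcard : T.card ≤ (orbit H x).ncard := by
    rw [← Set.ncard_coe_finset]
    exact Set.ncard_le_ncard hsub (Set.toFinite _)
  exact Nat.mul_le_mul_right _ hcard

lemma t0 : 8 * Nat.card C1 ≤ Nat.card C := by
  have h := step' (H := C) 0 ({0,1,2,3,4,5,6,7} : Finset (Fin 8)) ?_
  · rwa [show (({0,1,2,3,4,5,6,7} : Finset (Fin 8))).card = 8 by decide] at h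
  · intro t ht
    fin_cases ht
    · exact mem_orbit_iff.mpr ⟨(1 : C), by decide⟩
    · exact mem_orbit_iff.mpr ⟨(cα : C), by decide⟩
    · exact mem_orbit_iff.mpr ⟨(cα * cα : C), by decide⟩
    · exact mem_orbit_iff.mpr ⟨(cα⁻¹ * cα⁻¹ : C), by decide⟩
    · exact mem_orbit_iff.mpr ⟨(cα⁻¹ : C), by decide⟩
    · exact mem_orbit_iff.mpr ⟨(cβ * cα : C), by decide⟩
    · exact mem_orbit_iff.mpr ⟨(cβ * cα * cα : C), by decide⟩
    · exact mem_orbit_iff.mpr ⟨(cβ⁻¹ * cα⁻¹ : C), by decide⟩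

lemma t1 : 7 * Nat.card C2 ≤ Nat.card C1 := by
  have h := step' (H := C1) 1 ({1,2,3,4,5,6,7} : Finset (Fin 8)) ?_
  · rwa [show (({1,2,3,4,5,6,7} : Finset (Fin 8))).card = 7 by decide] at h
  · intro t ht
    fin_cases ht
    · exact mem_orbit_iff.mpr ⟨(⟨(1 : C), mem_stabilizer_iff.mpr (by decide)⟩), by decide⟩
    · exact mem_orbit_iff.mpr ⟨(⟨(cβ * cβ : C), mem_stabilizer_iff.mpr (by decide)⟩), by decide⟩
    · exact mem_orbit_iff.mpr ⟨(⟨(cβ⁻¹ * cβ⁻¹ * cβ⁻¹ : C), mem_stabilizer_iff.mpr (by decide)⟩), by decide⟩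
    · exact mem_orbit_iff.mpr ⟨(⟨(cβ⁻¹ : C), mem_stabilizer_iff.mpr (by decide)⟩), by decide⟩
    · exact mem_orbit_iff.mpr ⟨(⟨(cβ : C), mem_stabilizer_iff.mpr (by decide)⟩), by decide⟩
    · exact mem_orbit_iff.mpr ⟨(⟨(cβ * cβ * cβ : C), mem_stabilizer_iff.mpr (by decide)⟩), by decide⟩
    · exact mem_orbit_iff.mpr ⟨(⟨(cβ⁻¹ * cβ⁻¹ : C), mem_stabilizer_iff.mpr (by decide)⟩), by decide⟩

lemma t2 : 6 * Nat.card C3 ≤ Nat.card C2 := by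
  have h := step' (H := C2) 2 ({2,3,4,5,6,7} : Finset (Fin 8)) ?_
  · rwa [show (({2,3,4,5,6,7} : Finset (Fin 8))).card = 6 by decide] at h
  · intro t ht
    fin_cases ht
    · exact mem_orbit_iff.mpr ⟨(⟨(⟨(1 : C), mem_stabilizer_iff.mpr (by decide)⟩), mem_stabilizer_iff.mpr (by decide)⟩), by decide⟩
    · exact mem_orbit_iff.mpr ⟨(⟨(⟨(cα⁻¹ * cα⁻¹ * cβ⁻¹ * cβ⁻¹ * cα⁻¹ * cα⁻¹ : C), mem_stabilizer_iff.mpr (by decide)⟩), mem_stabilizer_iff.mpr (by decide)⟩), by decide⟩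
    · exact mem_orbit_iff.mpr ⟨(⟨(⟨(cα⁻¹ * cβ * cβ * cα * cβ⁻¹ * cα⁻¹ : C), mem_stabilizer_iff.mpr (by decide)⟩), mem_stabilizer_iff.mpr (by decide)⟩), by decide⟩
    · exact mem_orbit_iff.mpr ⟨(⟨(⟨(cα * cα * cβ * cβ * cα * cα : C), mem_stabilizer_iff.mpr (by decide)⟩), mem_stabilizer_iff.mpr (by decide)⟩), by decide⟩
    · exact mem_orbit_iff.mpr ⟨(⟨(⟨(cα * cα * cβ * cα * cβ * cα * cα : C), mem_stabilizer_iff.mpr (by decide)⟩), mem_stabilizer_iff.mpr (by decide)⟩), by decide⟩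
    · exact mem_orbit_iff.mpr ⟨(⟨(⟨(cα⁻¹ * cα⁻¹ * cβ⁻¹ * cα⁻¹ * cβ⁻¹ * cα⁻¹ * cα⁻¹ : C), mem_stabilizer_iff.mpr (by decide)⟩), mem_stabilizer_iff.mpr (by decide)⟩), by decide⟩

lemma t3 : 5 * Nat.card C4 ≤ Nat.card C3 := by
  have h := step' (H := C3) 3 ({3,4,5,6,7} : Finset (Fin 8)) ?_
  · rwa [show (({3,4,5,6,7} : Finset (Fin 8))).card = 5 by decide] at h
  · intro t ht
    fin_cases ht
    · exact mem_orbit_iff.mpr ⟨(⟨(⟨(⟨(1 : C), mem_stabilizer_iff.mpr (by decide)⟩), mem_stabilizer_iff.mpr (by decide)⟩), mem_stabilizer_iff.mpr (by decide)⟩), by decide⟩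
    · exact mem_orbit_iff.mpr ⟨(⟨(⟨(⟨(cα⁻¹ * cβ⁻¹ * cα⁻¹ * cβ * cα : C), mem_stabilizer_iff.mpr (by decide)⟩), mem_stabilizer_iff.mpr (by decide)⟩), mem_stabilizer_iff.mpr (by decide)⟩), by decide⟩
    · exact mem_orbit_iff.mpr ⟨(⟨(⟨(⟨(cα⁻¹ * cα⁻¹ * cβ * cβ * cα : C), mem_stabilizer_iff.mpr (by decide)⟩), mem_stabilizer_iff.mpr (by decide)⟩), mem_stabilizer_iff.mpr (by decide)⟩), by decide⟩
    · exact mem_orbit_iff.mpr ⟨(⟨(⟨(⟨(cα⁻¹ * cα⁻¹ * cβ * cα * cβ * cα : C), mem_stabilizer_iff.mpr (by decide)⟩), mem_stabilizer_iff.mpr (by decide)⟩), mem_stabilizer_iff.mpr (by decide)⟩), by decide⟩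
    · exact mem_orbit_iff.mpr ⟨(⟨(⟨(⟨(cα⁻¹ * cβ⁻¹ * cα⁻¹ * cα⁻¹ * cβ * cα : C), mem_stabilizer_iff.mpr (by decide)⟩), mem_stabilizer_iff.mpr (by decide)⟩), mem_stabilizer_iff.mpr (by decide)⟩), by decide⟩

lemma t4 : 4 * Nat.card C5 ≤ Nat.card C4 := by
  have h := step' (H := C4) 4 ({4,5,6,7} : Finset (Fin 8)) ?_
  · rwa [show (({4,5,6,7} : Finset (Fin 8))).card = 4 by decide] at h
  · intro t ht
    fin_cases ht
    · exact mem_orbit_iff.mpr ⟨(⟨(⟨(⟨(⟨(1 : C), mem_stabilizer_iff.mpr (by decide)⟩), mem_stabilizer_iff.mpr (by decide)⟩), mem_stabilizer_iff.mpr (by decide)⟩), mem_stabilizer_iff.mpr (by decide)⟩), by decide⟩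
    · exact mem_orbit_iff.mpr ⟨(⟨(⟨(⟨(⟨(cβ * cβ * cα * cβ * cα * cα * cβ * cβ * cα * cβ * cα * cα : C), mem_stabilizer_iff.mpr (by decide)⟩), mem_stabilizer_iff.mpr (by decide)⟩), mem_stabilizer_iff.mpr (by decide)⟩), mem_stabilizer_iff.mpr (by decide)⟩), by decide⟩
    · exact mem_orbit_iff.mpr ⟨(⟨(⟨(⟨(⟨(cβ * cα * cβ * cβ * cα * cα * cβ * cα * cβ * cβ * cα * cα : C), mem_stabilizer_iff.mpr (by decide)⟩), mem_stabilizer_iff.mpr (by decide)⟩), mem_stabilizer_iff.mpr (by decide)⟩), mem_stabilizer_iff.mpr (by decide)⟩), by decide⟩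
    · exact mem_orbit_iff.mpr ⟨(⟨(⟨(⟨(⟨(cα * cβ⁻¹ * cα⁻¹ * cβ⁻¹ * cβ⁻¹ * cα⁻¹ * cβ * cα * cβ⁻¹ * cα⁻¹ * cβ⁻¹ : C), mem_stabilizer_iff.mpr (by decide)⟩), mem_stabilizer_iff.mpr (by decide)⟩), mem_stabilizer_iff.mpr (by decide)⟩), mem_stabilizer_iff.mpr (by decide)⟩), by decide⟩

lemma t5 : 3 * Nat.card C6 ≤ Nat.card C5 := by
  have h := step' (H := C5) 5 ({5,6,7} : Finset (Fin 8)) ?_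
  · rwa [show (({5,6,7} : Finset (Fin 8))).card = 3 by decide] at h
  · intro t ht
    fin_cases ht
    · exact mem_orbit_iff.mpr ⟨(⟨(⟨(⟨(⟨(⟨(1 : C), mem_stabilizer_iff.mpr (by decide)⟩), mem_stabilizer_iff.mpr (by decide)⟩), mem_stabilizer_iff.mpr (by decide)⟩), mem_stabilizer_iff.mpr (by decide)⟩), mem_stabilizer_iff.mpr (by decide)⟩), by decide⟩
    · exact mem_orbit_iff.mpr ⟨(⟨(⟨(⟨(⟨(⟨(cβ⁻¹ * cα⁻¹ * cβ * cα * cβ⁻¹ * cβ⁻¹ * cα⁻¹ * cβ * cα * cβ * cα * cβ⁻¹ * cα⁻¹ * cβ⁻¹ : C), mem_stabilizer_iff.mpr (by decide)⟩), mem_stabilizer_iff.mpr (by decide)⟩), mem_stabilizer_iff.mpr (by decide)⟩), mem_stabilizer_iff.mpr (by decide)⟩), mem_stabilizer_iff.mpr (by decide)⟩), by decide⟩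
    · exact mem_orbit_iff.mpr ⟨(⟨(⟨(⟨(⟨(⟨(cβ * cα * cα * cβ⁻¹ * cβ⁻¹ * cα⁻¹ * cβ * cα * cβ⁻¹ * cβ⁻¹ * cα⁻¹ * cβ * cα * cβ : C), mem_stabilizer_iff.mpr (by decide)⟩), mem_stabilizer_iff.mpr (by decide)⟩), mem_stabilizer_iff.mpr (by decide)⟩), mem_stabilizer_iff.mpr (by decide)⟩), mem_stabilizer_iff.mpr (by decide)⟩), by decide⟩

lemma cardC : 20160 ≤ Nat.card C := by
  have h6 : 1 ≤ Nat.card C6 := Nat.one_le_iff_ne_zero.mpr (@Nat.card_pos _ ⟨1⟩ _).ne'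
  have h5 : 3 ≤ Nat.card C5 := le_trans (le_trans (by omega : (3:ℕ) ≤ 3 * 1) (Nat.mul_le_mul_left 3 h6)) t5
  have h4 : 12 ≤ Nat.card C4 := le_trans (Nat.mul_le_mul_left 4 h5) t4
  have h3 : 60 ≤ Nat.card C3 := le_trans (Nat.mul_le_mul_left 5 h4) t3
  have h2 : 360 ≤ Nat.card C2 := le_trans (Nat.mul_le_mul_left 6 h3) t2
  have h1 : 2520 ≤ Nat.card C1 := le_trans (Nat.mul_le_mul_left 7 h2) t1
  have h0 : 20160 ≤ Nat.card C := le_trans (Nat.mul_le_mul_left 8 h1) t0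
  exact h0

lemma sign_f : ∀ i : Fin 2, Equiv.Perm.sign (f i) = 1 := by
  have hs : ∀ x y : Fin 8, x ≠ y → Equiv.Perm.sign (Equiv.swap x y) = -1 := fun x y h =>
    Equiv.Perm.sign_swap h
  intro i
  fin_cases i
  · show Equiv.Perm.sign α = 1
    rw [α, map_mul, map_mul, map_mul, hs _ _ (by decide), hs _ _ (by decide),
      hs _ _ (by decide), hs _ _ (by decide)]
    decide
  · show Equiv.Perm.sign β = 1
    rw [β, map_mul, map_mul, map_mul, map_mul, map_mul, hs _ _ (by decide), hs _ _ (by decide),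
      hs _ _ (by decide), hs _ _ (by decide), hs _ _ (by decide), hs _ _ (by decide)]
    decide

lemma cardA : Nat.card (alternatingGroup (Fin 8)) = 20160 := by
  have h := two_mul_card_alternatingGroup (α := Fin 8)
  have hp : Fintype.card (Equiv.Perm (Fin 8)) = 40320 := by
    rw [Fintype.card_perm]
    decide
  rw [Nat.card_eq_fintype_card]
  omega

lemma hCA : C = alternatingGroup (Fin 8) := by
  apply Subgroup.eq_of_le_of_card_ge
  · rw [C, Subgroup.closure_le]
    rintro x ⟨i, rfl⟩
    exact Equiv.Perm.mem_alternatingGroup.mpr (sign_f i)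
  · rw [cardA]
    exact cardC

instance actG : MulAction G (Finset (Fin 8)) := MulAction.compHom _ φ

def pt : Finset (Fin 8) := {0, 1}

def H : Subgroup G := stabilizer G pt

lemma smulG (g : G) (s : Finset (Fin 8)) : g • s = φ g • s := rfl

def ga : G := PresentedGroup.of 0
def gb : G := PresentedGroup.of 1

lemma φa : φ ga = α := φ_of 0
lemma φb : φ gb = β := φ_of 1

def T28 : Finset (Finset (Fin 8)) := {{0,1}, {0,2}, {0,3}, {0,4}, {0,5}, {0,6}, {0,7}, {1,2}, {1,3}, {1,4}, {1,5}, {1,6}, {1,7}, {2,3}, {2,4}, {2,5}, {2,6}, {2,7}, {3,4}, {3,5}, {3,6}, {3,7}, {4,5}, {4,6}, {4,7}, {5,6}, {5,7}, {6,7}}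

lemma card2_mem_T28 : ∀ s : Finset (Fin 8), s.card = 2 → s ∈ T28 := by decide

lemma orbit_pt : orbit G pt = ↑T28 := by
  ext s
  constructor
  · rintro ⟨g, rfl⟩
    have hc : (g • pt : Finset (Fin 8)).card = 2 := by
      rw [smulG, Finset.card_smul_finset]
      decide
    exact card2_mem_T28 _ hc
  · intro hs
    have hs' : s ∈ T28 := hs
    fin_cases hs'

    · exact mem_orbit_iff.mpr ⟨1, by rw [smulG]; simp only [map_mul, map_inv, map_one, φa, φb]; decide⟩
    · exact mem_orbit_iff.mpr ⟨gb * gb, by rw [smulG]; simp only [map_mul, map_inv, map_one, φa, φb]; decide⟩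
    · exact mem_orbit_iff.mpr ⟨gb⁻¹ * gb⁻¹ * ga⁻¹, by rw [smulG]; simp only [map_mul, map_inv, map_one, φa, φb]; decide⟩
    · exact mem_orbit_iff.mpr ⟨ga⁻¹, by rw [smulG]; simp only [map_mul, map_inv, map_one, φa, φb]; decide⟩
    · exact mem_orbit_iff.mpr ⟨gb, by rw [smulG]; simp only [map_mul, map_inv, map_one, φa, φb]; decide⟩
    · exact mem_orbit_iff.mpr ⟨gb * gb * gb, by rw [smulG]; simp only [map_mul, map_inv, map_one, φa, φb]; decide⟩
    · exact mem_orbit_iff.mpr ⟨gb⁻¹ * ga⁻¹, by rw [smulG]; simp only [map_mul, map_inv, map_one, φa, φb]; decide⟩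
    · exact mem_orbit_iff.mpr ⟨ga, by rw [smulG]; simp only [map_mul, map_inv, map_one, φa, φb]; decide⟩
    · exact mem_orbit_iff.mpr ⟨ga * gb * gb, by rw [smulG]; simp only [map_mul, map_inv, map_one, φa, φb]; decide⟩
    · exact mem_orbit_iff.mpr ⟨ga⁻¹ * gb * gb, by rw [smulG]; simp only [map_mul, map_inv, map_one, φa, φb]; decide⟩
    · exact mem_orbit_iff.mpr ⟨ga * gb, by rw [smulG]; simp only [map_mul, map_inv, map_one, φa, φb]; decide⟩
    · exact mem_orbit_iff.mpr ⟨ga * gb * gb * gb, by rw [smulG]; simp only [map_mul, map_inv, map_one, φa, φb]; decide⟩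
    · exact mem_orbit_iff.mpr ⟨ga * gb⁻¹ * ga⁻¹, by rw [smulG]; simp only [map_mul, map_inv, map_one, φa, φb]; decide⟩
    · exact mem_orbit_iff.mpr ⟨ga * ga, by rw [smulG]; simp only [map_mul, map_inv, map_one, φa, φb]; decide⟩
    · exact mem_orbit_iff.mpr ⟨ga * ga * gb * gb, by rw [smulG]; simp only [map_mul, map_inv, map_one, φa, φb]; decide⟩
    · exact mem_orbit_iff.mpr ⟨ga * ga * gb, by rw [smulG]; simp only [map_mul, map_inv, map_one, φa, φb]; decide⟩
    · exact mem_orbit_iff.mpr ⟨gb * ga * ga * gb, by rw [smulG]; simp only [map_mul, map_inv, map_one, φa, φb]; decide⟩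
    · exact mem_orbit_iff.mpr ⟨ga * ga * gb⁻¹ * ga⁻¹, by rw [smulG]; simp only [map_mul, map_inv, map_one, φa, φb]; decide⟩
    · exact mem_orbit_iff.mpr ⟨ga⁻¹ * ga⁻¹, by rw [smulG]; simp only [map_mul, map_inv, map_one, φa, φb]; decide⟩
    · exact mem_orbit_iff.mpr ⟨ga⁻¹ * ga⁻¹ * gb, by rw [smulG]; simp only [map_mul, map_inv, map_one, φa, φb]; decide⟩
    · exact mem_orbit_iff.mpr ⟨ga * gb * ga * ga * gb, by rw [smulG]; simp only [map_mul, map_inv, map_one, φa, φb]; decide⟩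
    · exact mem_orbit_iff.mpr ⟨ga⁻¹ * ga⁻¹ * gb⁻¹ * ga⁻¹, by rw [smulG]; simp only [map_mul, map_inv, map_one, φa, φb]; decide⟩
    · exact mem_orbit_iff.mpr ⟨ga⁻¹ * gb, by rw [smulG]; simp only [map_mul, map_inv, map_one, φa, φb]; decide⟩
    · exact mem_orbit_iff.mpr ⟨ga⁻¹ * gb * gb * gb, by rw [smulG]; simp only [map_mul, map_inv, map_one, φa, φb]; decide⟩
    · exact mem_orbit_iff.mpr ⟨ga⁻¹ * gb⁻¹ * ga⁻¹, by rw [smulG]; simp only [map_mul, map_inv, map_one, φa, φb]; decide⟩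
    · exact mem_orbit_iff.mpr ⟨gb * ga, by rw [smulG]; simp only [map_mul, map_inv, map_one, φa, φb]; decide⟩
    · exact mem_orbit_iff.mpr ⟨gb * ga * gb * gb, by rw [smulG]; simp only [map_mul, map_inv, map_one, φa, φb]; decide⟩
    · exact mem_orbit_iff.mpr ⟨gb * ga * ga, by rw [smulG]; simp only [map_mul, map_inv, map_one, φa, φb]; decide⟩

lemma Hindex : H.index = 28 := by
  show (stabilizer G pt).index = 28
  rw [index_stabilizer, orbit_pt, Set.ncard_coe_finset]
  decide

lemma perm_eq_one {p : Equiv.Perm (Fin 8)}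
    (hp : ∀ s : Finset (Fin 8), s.card = 2 → p • s = s) : p = 1 := by
  have hvw : ∀ u : Fin 8, ∃ v w, u ≠ v ∧ u ≠ w ∧ v ≠ w := by decide
  apply Equiv.ext
  intro u
  obtain ⟨v, w, h1, h2, h3⟩ := hvw u
  have e1 := hp {u, v} (Finset.card_pair h1)
  have e2 := hp {u, w} (Finset.card_pair h2)
  have m1 : p • u ∈ ({u, v} : Finset (Fin 8)) := by
    rw [← e1]; exact Finset.smul_mem_smul_finset (by simp)
  have m2 : p • u ∈ ({u, w} : Finset (Fin 8)) := by
    rw [← e2]; exact Finset.smul_mem_smul_finset (by simp)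
  simp only [Equiv.Perm.smul_def, Finset.mem_insert, Finset.mem_singleton] at m1 m2
  have hpu : p u = u := by
    rcases m1 with h | h
    · exact h
    · rcases m2 with h' | h'
      · exact h'
      · exact absurd (h ▸ h') h3
  simpa using hpu

lemma mem_normalCore_iff {G' : Type*} [Group G'] {K : Subgroup G'} {g : G'} :
    g ∈ K.normalCore ↔ ∀ x : G', x * g * x⁻¹ ∈ K := Iff.rfl

lemma hcore : H.normalCore = φ.ker := by
  ext g
  rw [mem_normalCore_iff, MonoidHom.mem_ker]
  constructor
  · intro hg
    apply perm_eq_one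
    intro s hs
    have hsorb : s ∈ orbit G pt := by rw [orbit_pt]; exact card2_mem_T28 s hs
    obtain ⟨x, rfl⟩ := mem_orbit_iff.mp hsorb
    have h2 : (x⁻¹ * g * x⁻¹⁻¹) • pt = pt := hg x⁻¹
    rw [inv_inv] at h2
    calc φ g • (x • pt) = (g * x) • pt := by rw [smulG x, smulG (g*x), map_mul, mul_smul]
      _ = (x * (x⁻¹ * g * x)) • pt := by group
      _ = x • pt := by rw [mul_smul, h2]
  · intro hg x
    have : ∀ s : Finset (Fin 8), g • s = s := fun s => by rw [smulG, hg, one_smul]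
    show (x * g * x⁻¹) • pt = pt
    rw [mul_smul, mul_smul, this, smul_inv_smul]

theorem exists_index_twentyeight_subgroup_with_coset_action_A8 :
    ∃ H : Subgroup G, H.index = 28 ∧
      Nonempty ((MulAction.toPermHom G (G ⧸ H)).range ≃* alternatingGroup (Fin 8)) := by
  refine ⟨H, Hindex, ⟨?_⟩⟩
  have e1 := (QuotientGroup.quotientKerEquivRange (MulAction.toPermHom G (G ⧸ H))).symm
  have e2 : G ⧸ (MulAction.toPermHom G (G ⧸ H)).ker ≃* G ⧸ φ.ker :=
    QuotientGroup.quotientMulEquivOfEq (by rw [← Subgroup.normalCore_eq_ker, hcore])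
  have e3 := QuotientGroup.quotientKerEquivRange φ
  have e4 : φ.range ≃* alternatingGroup (Fin 8) :=
    MulEquiv.subgroupCongr (range_φ.trans hCA)
  exact ((e1.trans e2).trans e3).trans e4

end Stmt3
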